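/- Let (Z_n) be real random variables and (a_n) positive reals with a_n → ∞. Suppose for every x < 0, lim_n (1/a_n²) log P(Z_n ≤ x) = −x²/2, and for every x > 0, lim_n (1/a_n²) log P(Z_n ≥ x) = −x²/2. Then for every open interval U = (a,b) with a < b, at least one endpoint finite and neither endpoint zero, lim_n (1/a_n²) log P(Z_n ∈ U) equals −b²/2 if a < b < 0, equals 0 if a < 0 < b, and equals −a²/2 if 0 < a < b. -/

import Mathlib

/-!
Pass to the exponential scale `p ↦ p ^ (1 / a_n²)`, the image of `(1 / a_n²) log p` under `exp`.
There a term whose rate is strictly smaller than that of another is eventually at most half of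
it, so it cannot affect the rate of a difference. For an interval `I` below `0` with right end
`c`, `P(Z_n ≤ x) ≤ P(Z_n ∈ I) + P(Z_n ≤ b)` for `b < x < c`, and the rate `exp (-x² / 2)` of
`P(Z_n ≤ x)` is strictly increasing on `(-∞, 0)`; hence the rate of `P(Z_n ∈ I)` is at least
`exp (-x² / 2)` for every such `x`, and letting `x ↑ c` matches the trivial upper bound
`P(Z_n ≤ c)`. Intervals above `0` follow by reflecting `Z_n`, and an interval `(b, c) ∋ 0` has
probability at least `1 - P(Z_n ≤ b) - P(Z_n ≥ c)`, whose rate is `1`.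
-/

open Filter MeasureTheory Topology Set
open scoped ENNReal

lemma tendsto_mul_log_iff_tendsto_rpow {ι : Type*} {l : Filter ι} {c : ι → ℝ} {f : ι → ℝ≥0∞}
    {r : EReal} :
    Tendsto (fun i => (c i : EReal) * ENNReal.log (f i)) l (𝓝 r) ↔
      Tendsto (fun i => f i ^ c i) l (𝓝 (EReal.exp r)) := by
  rw [EReal.expHomeomorph.isEmbedding.tendsto_nhds_iff]
  simp [Function.comp_def, ENNReal.rpow_eq_exp_mul_log]

lemma ENNReal.tendsto_const_rpow_one {ι : Type*} {l : Filter ι} {t : ι → ℝ}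
    (ht : Tendsto t l (𝓝 0)) {R : ℝ≥0∞} (h0 : R ≠ 0) (htop : R ≠ ∞) :
    Tendsto (fun i => R ^ t i) l (𝓝 1) := by
  lift R to NNReal using htop
  have h0' : R ≠ 0 := by exact_mod_cast h0
  simpa [ENNReal.coe_rpow_of_ne_zero h0'] using
    ENNReal.tendsto_coe.2 ((tendsto_const_nhds (x := R)).nnrpow ht (Or.inl h0'))

section Rate

variable {A : ℕ → ℝ}

lemma eventually_le_mul_of_tendsto_rpow_inv_lt (hA : Tendsto A atTop atTop)
    {p q : ℕ → ℝ≥0∞} {P Q : ℝ≥0∞}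
    (hp : Tendsto (fun n => p n ^ (A n)⁻¹) atTop (𝓝 P))
    (hq : Tendsto (fun n => q n ^ (A n)⁻¹) atTop (𝓝 Q)) (hQP : Q < P)
    {ε : ℝ≥0∞} (hε : ε ≠ 0) :
    ∀ᶠ n in atTop, q n ≤ ε * p n := by
  obtain ⟨R, hQR, hRP⟩ := exists_between hQP
  obtain ⟨R', hRR', hR'P⟩ := exists_between hRP
  have hR'0 : R' ≠ 0 := (hQR.trans hRR').ne_bot
  have hR'top : R' ≠ ∞ := hR'P.ne_top
  have hratio : R / R' < 1 := (ENNReal.div_lt_iff (.inl hR'0) (.inl hR'top)).2 (by simpa)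
  have hsmall := ((ENNReal.tendsto_rpow_atTop_of_base_lt_one hratio).comp hA).eventually_lt_const
    (pos_iff_ne_zero.2 hε)
  filter_upwards [hA.eventually_gt_atTop 0, hp.eventually_const_lt hR'P,
    hq.eventually_lt_const hQR, hsmall] with n hAn hpn hqn hεn
  calc q n ≤ R ^ A n := (ENNReal.rpow_inv_le_iff hAn).1 hqn.le
    _ = (R / R') ^ A n * R' ^ A n := by
      rw [← ENNReal.mul_rpow_of_nonneg _ _ hAn.le, ENNReal.div_mul_cancel hR'0 hR'top]
    _ ≤ ε * p n := by
      gcongr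
      · exact hεn.le
      · exact (ENNReal.le_rpow_inv_iff hAn).1 hpn.le

lemma tendsto_rpow_inv_mul_const (hA : Tendsto A atTop atTop) {p : ℕ → ℝ≥0∞} {P c : ℝ≥0∞}
    (hc0 : c ≠ 0) (hctop : c ≠ ∞) (hp : Tendsto (fun n => p n ^ (A n)⁻¹) atTop (𝓝 P)) :
    Tendsto (fun n => (c * p n) ^ (A n)⁻¹) atTop (𝓝 P) := by
  have hc := ENNReal.tendsto_const_rpow_one (t := fun n => (A n)⁻¹) hA.inv_tendsto_atTop hc0 hctop
  have := ENNReal.Tendsto.mul hc (.inl one_ne_zero) hp (.inr ENNReal.one_ne_top)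
  rw [one_mul] at this
  refine this.congr' ?_
  filter_upwards [hA.eventually_gt_atTop 0] with n hAn
  rw [ENNReal.mul_rpow_of_nonneg _ _ (inv_nonneg.2 hAn.le)]

lemma limsup_rpow_inv_le (hA : Tendsto A atTop atTop) {u p : ℕ → ℝ≥0∞} {P : ℝ≥0∞}
    (hle : ∀ n, u n ≤ p n) (hp : Tendsto (fun n => p n ^ (A n)⁻¹) atTop (𝓝 P)) :
    limsup (fun n => u n ^ (A n)⁻¹) atTop ≤ P := by
  rw [← hp.limsup_eq]
  refine limsup_le_limsup ?_
  filter_upwards [hA.eventually_gt_atTop 0] with n hAn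
  exact ENNReal.rpow_le_rpow (hle n) (inv_nonneg.2 hAn.le)

lemma le_liminf_rpow_inv_of_le_add (hA : Tendsto A atTop atTop) {u p q : ℕ → ℝ≥0∞}
    {P : ℝ≥0∞} (hp : Tendsto (fun n => p n ^ (A n)⁻¹) atTop (𝓝 P)) (hptop : ∀ n, p n ≠ ∞)
    (hle : ∀ n, p n ≤ u n + q n) (hq : ∀ᶠ n in atTop, q n ≤ 2⁻¹ * p n) :
    P ≤ liminf (fun n => u n ^ (A n)⁻¹) atTop := by
  have half_le : ∀ᶠ n in atTop, 2⁻¹ * p n ≤ u n := by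
    filter_upwards [hq] with n hqn
    have hhalf_top : 2⁻¹ * p n ≠ ∞ := ENNReal.mul_ne_top (by simp) (hptop n)
    refine (ENNReal.add_le_add_iff_right hhalf_top).1 ?_
    calc 2⁻¹ * p n + 2⁻¹ * p n = p n := by rw [← add_mul, ENNReal.inv_two_add_inv_two, one_mul]
      _ ≤ u n + 2⁻¹ * p n := (hle n).trans (add_le_add_right hqn _)
  rw [← (tendsto_rpow_inv_mul_const hA (c := 2⁻¹) (by simp) (by simp) hp).liminf_eq]
  refine liminf_le_liminf ?_
  filter_upwards [half_le, hA.eventually_gt_atTop 0] with n hn hAn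
  exact ENNReal.rpow_le_rpow hn (inv_nonneg.2 hAn.le)

lemma tendsto_rpow_inv_of_tail_bounds (hA : Tendsto A atTop atTop) {T : ℝ → ℕ → ℝ≥0∞}
    {g : ℝ → ℝ≥0∞} {u : ℕ → ℝ≥0∞} {b c : ℝ} (hbc : b < c)
    (hT : ∀ x ∈ Icc b c, Tendsto (fun n => T x n ^ (A n)⁻¹) atTop (𝓝 (g x)))
    (hTtop : ∀ x n, T x n ≠ ∞) (hg : ContinuousWithinAt g (Iio c) c)
    (hg_mono : StrictMonoOn g (Icc b c))
    (hlow : ∀ x ∈ Ioo b c, ∀ n, T x n ≤ u n + T b n) (hup : ∀ n, u n ≤ T c n) :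
    Tendsto (fun n => u n ^ (A n)⁻¹) atTop (𝓝 (g c)) := by
  refine tendsto_of_le_liminf_of_limsup_le ?_ (limsup_rpow_inv_le hA hup (hT c ⟨hbc.le, le_rfl⟩))
  refine le_of_tendsto hg ?_
  filter_upwards [Ioo_mem_nhdsLT hbc] with x hx
  have hbx : g b < g x := hg_mono ⟨le_rfl, hbc.le⟩ (Ioo_subset_Icc_self hx) hx.1
  exact le_liminf_rpow_inv_of_le_add hA (hT x (Ioo_subset_Icc_self hx)) (hTtop x) (hlow x hx)
    (eventually_le_mul_of_tendsto_rpow_inv_lt hA (hT x (Ioo_subset_Icc_self hx))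
      (hT b ⟨le_rfl, hbc.le⟩) hbx (by simp))

lemma tendsto_rpow_inv_one_of_one_le_add (hA : Tendsto A atTop atTop)
    {u q₁ q₂ : ℕ → ℝ≥0∞} {Q₁ Q₂ : ℝ≥0∞}
    (hq₁ : Tendsto (fun n => q₁ n ^ (A n)⁻¹) atTop (𝓝 Q₁)) (hQ₁ : Q₁ < 1)
    (hq₂ : Tendsto (fun n => q₂ n ^ (A n)⁻¹) atTop (𝓝 Q₂)) (hQ₂ : Q₂ < 1)
    (hu : ∀ n, u n ≤ 1) (hle : ∀ n, 1 ≤ u n + (q₁ n + q₂ n)) :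
    Tendsto (fun n => u n ^ (A n)⁻¹) atTop (𝓝 1) := by
  have hone : Tendsto (fun n => (1 : ℝ≥0∞) ^ (A n)⁻¹) atTop (𝓝 1) := by
    simp only [ENNReal.one_rpow]; exact tendsto_const_nhds
  have small {q : ℕ → ℝ≥0∞} {Q : ℝ≥0∞} (hq : Tendsto (fun n => q n ^ (A n)⁻¹) atTop (𝓝 Q))
      (hQ : Q < 1) :
      ∀ᶠ n in atTop, q n ≤ 2⁻¹ / 2 := by
    simpa using eventually_le_mul_of_tendsto_rpow_inv_lt hA hone hq hQ
      (ε := 2⁻¹ / 2) (by simp)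
  refine tendsto_of_le_liminf_of_limsup_le ?_ (limsup_rpow_inv_le hA hu hone)
  refine le_liminf_rpow_inv_of_le_add hA hone (fun _ => ENNReal.one_ne_top) hle ?_
  filter_upwards [small hq₁ hQ₁, small hq₂ hQ₂] with n h₁ h₂
  calc q₁ n + q₂ n ≤ 2⁻¹ / 2 + 2⁻¹ / 2 := add_le_add h₁ h₂
    _ = 2⁻¹ * 1 := by rw [ENNReal.add_halves, mul_one]

end Rate

lemma strictMonoOn_exp_neg_sq_half :
    StrictMonoOn (fun x : ℝ => EReal.exp ((-(x ^ 2) / 2 : ℝ) : EReal)) (Iic 0) := by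
  intro x hx y hy hxy
  simp only [EReal.exp_lt_exp_iff, EReal.coe_lt_coe_iff]
  nlinarith [mem_Iic.1 hx, mem_Iic.1 hy]

lemma exp_neg_sq_half_lt_one {x : ℝ} (hx : x ≠ 0) :
    EReal.exp ((-(x ^ 2) / 2 : ℝ) : EReal) < 1 := by
  rw [EReal.exp_lt_one_iff, ← EReal.coe_zero, EReal.coe_lt_coe_iff]
  have : 0 < x ^ 2 := by positivity
  linarith

section Measure

variable {Ω : ℕ → Type*} [∀ n, MeasurableSpace (Ω n)] {μ : ∀ n, Measure (Ω n)}
  [∀ n, IsProbabilityMeasure (μ n)] {Z : ∀ n, Ω n → ℝ} {A : ℕ → ℝ}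

lemma tendsto_log_measure_of_subset_Iic (hA : Tendsto A atTop atTop)
    (hlow : ∀ x : ℝ, x < 0 →
      Tendsto (fun n => (((A n)⁻¹ : ℝ) : EReal) * ENNReal.log (μ n {ω | Z n ω ≤ x}))
        atTop (𝓝 ((-(x ^ 2) / 2 : ℝ) : EReal)))
    {I : Set ℝ} {b c : ℝ} (hbc : b < c) (hc : c < 0) (hI : Ioo b c ⊆ I) (hIc : I ⊆ Iic c) :
    Tendsto (fun n => (((A n)⁻¹ : ℝ) : EReal) * ENNReal.log (μ n {ω | Z n ω ∈ I}))
      atTop (𝓝 ((-(c ^ 2) / 2 : ℝ) : EReal)) := by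
  simp only [tendsto_mul_log_iff_tendsto_rpow] at hlow ⊢
  refine tendsto_rpow_inv_of_tail_bounds hA (T := fun x n => μ n {ω | Z n ω ≤ x}) hbc
    (fun x hx => hlow x (hx.2.trans_lt hc)) (fun _ _ => measure_ne_top _ _)
    (ENNReal.continuous_exp.comp (continuous_coe_real_ereal.comp (by fun_prop))).continuousWithinAt
    (strictMonoOn_exp_neg_sq_half.mono fun x hx => hx.2.trans hc.le)
    (fun x hx n => ?_) (fun n => measure_mono fun ω hω => hIc hω)
  refine (measure_mono fun ω (hω : Z n ω ≤ x) => ?_).trans (measure_union_le _ _)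
  rcases le_or_gt (Z n ω) b with h | h
  · exact .inr h
  · exact .inl (hI ⟨h, hω.trans_lt hx.2⟩)

lemma tendsto_log_measure_of_subset_Ici (hA : Tendsto A atTop atTop)
    (hup : ∀ x : ℝ, 0 < x →
      Tendsto (fun n => (((A n)⁻¹ : ℝ) : EReal) * ENNReal.log (μ n {ω | x ≤ Z n ω}))
        atTop (𝓝 ((-(x ^ 2) / 2 : ℝ) : EReal)))
    {I : Set ℝ} {b c : ℝ} (hbc : b < c) (hb : 0 < b) (hI : Ioo b c ⊆ I) (hIb : I ⊆ Ici b) :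
    Tendsto (fun n => (((A n)⁻¹ : ℝ) : EReal) * ENNReal.log (μ n {ω | Z n ω ∈ I}))
      atTop (𝓝 ((-(b ^ 2) / 2 : ℝ) : EReal)) := by
  have := tendsto_log_measure_of_subset_Iic (μ := μ) (Z := fun n ω => -Z n ω) (I := -I) hA
    (fun x hx => by simpa [neg_le] using hup (-x) (neg_pos.2 hx)) (neg_lt_neg hbc)
    (neg_neg_of_pos hb) (by rw [← neg_Ioo]; exact neg_subset_neg.2 hI)
    (by rw [← neg_Ici]; exact neg_subset_neg.2 hIb)
  simpa using this

lemma tendsto_log_measure_of_Ioo_subset (hA : Tendsto A atTop atTop)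
    (hlow : ∀ x : ℝ, x < 0 →
      Tendsto (fun n => (((A n)⁻¹ : ℝ) : EReal) * ENNReal.log (μ n {ω | Z n ω ≤ x}))
        atTop (𝓝 ((-(x ^ 2) / 2 : ℝ) : EReal)))
    (hup : ∀ x : ℝ, 0 < x →
      Tendsto (fun n => (((A n)⁻¹ : ℝ) : EReal) * ENNReal.log (μ n {ω | x ≤ Z n ω}))
        atTop (𝓝 ((-(x ^ 2) / 2 : ℝ) : EReal)))
    {I : Set ℝ} {b c : ℝ} (hb : b < 0) (hc : 0 < c) (hI : Ioo b c ⊆ I) :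
    Tendsto (fun n => (((A n)⁻¹ : ℝ) : EReal) * ENNReal.log (μ n {ω | Z n ω ∈ I}))
      atTop (𝓝 0) := by
  simp only [tendsto_mul_log_iff_tendsto_rpow, EReal.exp_zero] at hlow hup ⊢
  refine tendsto_rpow_inv_one_of_one_le_add hA (hlow b hb) (exp_neg_sq_half_lt_one hb.ne)
    (hup c hc) (exp_neg_sq_half_lt_one hc.ne') (fun n => prob_le_one) (fun n => ?_)
  calc 1 = μ n univ := measure_univ.symm
    _ ≤ μ n ({ω | Z n ω ∈ I} ∪ ({ω | Z n ω ≤ b} ∪ {ω | c ≤ Z n ω})) := by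
      refine measure_mono fun ω _ => ?_
      rcases le_or_gt (Z n ω) b with h | h
      · exact .inr (.inl h)
      rcases le_or_gt c (Z n ω) with h' | h'
      · exact .inr (.inr h')
      · exact .inl (hI ⟨h, h'⟩)
    _ ≤ _ := (measure_union_le _ _).trans (add_le_add_right (measure_union_le _ _) _)

end Measure

theorem open_interval_limits_from_tails_general
    (Ω : ℕ → Type*) [mΩ : ∀ n, MeasurableSpace (Ω n)]
    (μ : ∀ n, Measure (Ω n)) [hμ : ∀ n, IsProbabilityMeasure (μ n)]
    (Z : ∀ n, Ω n → ℝ) (a : ℕ → ℝ)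
    (ha : Tendsto a atTop atTop)
    (hlow : ∀ x : ℝ, x < 0 →
      Tendsto (fun n => ((((a n) ^ 2)⁻¹ : ℝ) : EReal) *
          ENNReal.log (μ n {ω | Z n ω ≤ x}))
        atTop (nhds ((-(x ^ 2) / 2 : ℝ) : EReal)))
    (hup : ∀ x : ℝ, 0 < x →
      Tendsto (fun n => ((((a n) ^ 2)⁻¹ : ℝ) : EReal) *
          ENNReal.log (μ n {ω | x ≤ Z n ω}))
        atTop (nhds ((-(x ^ 2) / 2 : ℝ) : EReal))) :
    (∀ b c : ℝ, b < c → b ≠ 0 → c ≠ 0 →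
      Tendsto (fun n => ((((a n) ^ 2)⁻¹ : ℝ) : EReal) *
          ENNReal.log (μ n {ω | Z n ω ∈ Set.Ioo b c}))
        atTop (nhds (if c < 0 then ((-(c ^ 2) / 2 : ℝ) : EReal)
          else if b < 0 then (0 : EReal) else ((-(b ^ 2) / 2 : ℝ) : EReal)))) ∧
    (∀ c : ℝ, c ≠ 0 →
      Tendsto (fun n => ((((a n) ^ 2)⁻¹ : ℝ) : EReal) *
          ENNReal.log (μ n {ω | Z n ω ∈ Set.Iio c}))
        atTop (nhds (if c < 0 then ((-(c ^ 2) / 2 : ℝ) : EReal) else (0 : EReal)))) ∧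
    (∀ b : ℝ, b ≠ 0 →
      Tendsto (fun n => ((((a n) ^ 2)⁻¹ : ℝ) : EReal) *
          ENNReal.log (μ n {ω | Z n ω ∈ Set.Ioi b}))
        atTop (nhds (if 0 < b then ((-(b ^ 2) / 2 : ℝ) : EReal) else (0 : EReal)))) := by
  have hA : Tendsto (fun n => a n ^ 2) atTop atTop := (tendsto_pow_atTop two_ne_zero).comp ha
  refine ⟨fun b c hbc hb hc => ?_, fun c hc => ?_, fun b hb => ?_⟩
  · split_ifs with hc' hb'
    · exact tendsto_log_measure_of_subset_Iic hA hlow hbc hc' subset_rfl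
        (Ioo_subset_Iio_self.trans Iio_subset_Iic_self)
    · exact tendsto_log_measure_of_Ioo_subset hA hlow hup hb'
        ((not_lt.1 hc').lt_of_ne' hc) subset_rfl
    · exact tendsto_log_measure_of_subset_Ici hA hup hbc ((not_lt.1 hb').lt_of_ne' hb)
        subset_rfl (Ioo_subset_Ioi_self.trans Ioi_subset_Ici_self)
  · split_ifs with hc'
    · exact tendsto_log_measure_of_subset_Iic hA hlow (sub_one_lt c) hc' Ioo_subset_Iio_self
        Iio_subset_Iic_self
    · exact tendsto_log_measure_of_Ioo_subset hA hlow hup neg_one_lt_zero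
        ((not_lt.1 hc').lt_of_ne' hc) Ioo_subset_Iio_self
  · split_ifs with hb'
    · exact tendsto_log_measure_of_subset_Ici hA hup (lt_add_one b) hb' Ioo_subset_Ioi_self
        Ioi_subset_Ici_self
    · exact tendsto_log_measure_of_Ioo_subset hA hlow hup ((not_lt.1 hb').lt_of_ne hb)
        zero_lt_one Ioo_subset_Ioi_self

/-- from the two one-sided moderate-deviation tail limits
`(1/a_n²) log P(Z_n ≤ x) → −x²/2` (x < 0) and `(1/a_n²) log P(Z_n ≥ x) → −x²/2` (x > 0),
one gets, for every open interval `U = (a,b)` with at least one endpoint finite and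
neither endpoint zero, `lim (1/a_n²) log P(Z_n ∈ U) = −b²/2` if `a < b < 0`, `= 0` if
`a < 0 < b`, and `= −a²/2` if `0 < a < b` (infinite endpoints included via `Iio`/`Ioi`);
the convention `log 0 = −∞` is realized by `ENNReal.log`, valued in `EReal`. -/
theorem open_interval_limits_from_tails
    (Ω : ℕ → Type*) [mΩ : ∀ n, MeasurableSpace (Ω n)]
    (μ : ∀ n, Measure (Ω n)) [hμ : ∀ n, IsProbabilityMeasure (μ n)]
    (Z : ∀ n, Ω n → ℝ) (a : ℕ → ℝ)
    (ha_pos : ∀ n, 0 < a n) (ha : Tendsto a atTop atTop)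
    (hlow : ∀ x : ℝ, x < 0 →
      Tendsto (fun n => ((((a n) ^ 2)⁻¹ : ℝ) : EReal) *
          ENNReal.log (μ n {ω | Z n ω ≤ x}))
        atTop (nhds ((-(x ^ 2) / 2 : ℝ) : EReal)))
    (hup : ∀ x : ℝ, 0 < x →
      Tendsto (fun n => ((((a n) ^ 2)⁻¹ : ℝ) : EReal) *
          ENNReal.log (μ n {ω | x ≤ Z n ω}))
        atTop (nhds ((-(x ^ 2) / 2 : ℝ) : EReal))) :
    (∀ b c : ℝ, b < c → b ≠ 0 → c ≠ 0 →
      Tendsto (fun n => ((((a n) ^ 2)⁻¹ : ℝ) : EReal) *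
          ENNReal.log (μ n {ω | Z n ω ∈ Set.Ioo b c}))
        atTop (nhds (if c < 0 then ((-(c ^ 2) / 2 : ℝ) : EReal)
          else if b < 0 then (0 : EReal) else ((-(b ^ 2) / 2 : ℝ) : EReal)))) ∧
    (∀ c : ℝ, c ≠ 0 →
      Tendsto (fun n => ((((a n) ^ 2)⁻¹ : ℝ) : EReal) *
          ENNReal.log (μ n {ω | Z n ω ∈ Set.Iio c}))
        atTop (nhds (if c < 0 then ((-(c ^ 2) / 2 : ℝ) : EReal) else (0 : EReal)))) ∧
    (∀ b : ℝ, b ≠ 0 →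
      Tendsto (fun n => ((((a n) ^ 2)⁻¹ : ℝ) : EReal) *
          ENNReal.log (μ n {ω | Z n ω ∈ Set.Ioi b}))
        atTop (nhds (if 0 < b then ((-(b ^ 2) / 2 : ℝ) : EReal) else (0 : EReal)))) :=
  open_interval_limits_from_tails_general Ω (mΩ := mΩ) μ (hμ := hμ) Z a ha hlow hup
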